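/- arXiv:1906.11438 — 3 statements merged into one kernel-verified Lean document; each statement's English description precedes it below -/
import Mathlib

section
/- The maximal forward-return domain U := {x ∈ Σ \ C : there exists t > 0 with φ(t, x) ∈ Σ \ C} is an open subset of Σ in the subspace topology of Σ. -/
open scoped RealInnerProductSpace
open Set Filter Topology

/-- IVT-based neighborhood lemma: if `g (·, x)` has derivative `h (·, x)`, and at
`(t₀, x₀)` with `t₀ > 0` we have `g = 0`, `h > 0`, then the set of `x` having a
positive time `t` with `g t x = 0` and `h t x ≠ 0` is a neighborhood of `x₀`. -/
lemma aux_nhds {E : Type*} [TopologicalSpace E] (g h : ℝ → E → ℝ)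
    (hg : Continuous fun p : ℝ × E => g p.1 p.2)
    (hh : Continuous fun p : ℝ × E => h p.1 p.2)
    (hderiv : ∀ (x : E) (t : ℝ), HasDerivAt (fun τ => g τ x) (h t x) t)
    (x₀ : E) (t₀ : ℝ) (ht₀ : 0 < t₀) (hg0 : g t₀ x₀ = 0) (hpos : 0 < h t₀ x₀) :
    {x : E | ∃ t > (0 : ℝ), g t x = 0 ∧ h t x ≠ 0} ∈ 𝓝 x₀ := by
  have hopen : IsOpen {p : ℝ × E | 0 < h p.1 p.2} := isOpen_lt continuous_const hh
  have hmem : {p : ℝ × E | 0 < h p.1 p.2} ∈ 𝓝 (t₀, x₀) := hopen.mem_nhds hpos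
  rw [mem_nhds_prod_iff] at hmem
  obtain ⟨U, hU, V, hV, hUV⟩ := hmem
  obtain ⟨ε, hε, hball⟩ := Metric.mem_nhds_iff.mp hU
  set δ : ℝ := min (ε / 2) (t₀ / 2) with hδdef
  have hδpos : 0 < δ := lt_min (by linarith) (by linarith)
  have hδt : δ < t₀ := lt_of_le_of_lt (min_le_right _ _) (by linarith)
  have hIccU : Icc (t₀ - δ) (t₀ + δ) ⊆ U := by
    intro t ht
    apply hball
    have h1 : |t - t₀| ≤ δ := abs_sub_le_iff.mpr ⟨by linarith [ht.2], by linarith [ht.1]⟩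
    have h2 : δ < ε := lt_of_le_of_lt (min_le_left _ _) (by linarith)
    exact Metric.mem_ball.mpr (lt_of_le_of_lt (by simpa [Real.dist_eq] using h1) h2)
  have hhpos : ∀ x ∈ V, ∀ t ∈ Icc (t₀ - δ) (t₀ + δ), 0 < h t x := fun x hx t ht =>
    hUV (Set.mk_mem_prod (hIccU ht) hx)
  have hx₀V : x₀ ∈ V := mem_of_mem_nhds hV
  have hmono : StrictMonoOn (fun t => g t x₀) (Icc (t₀ - δ) (t₀ + δ)) := by
    apply strictMonoOn_of_hasDerivWithinAt_pos (convex_Icc _ _)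
      ((hg.comp (continuous_id.prodMk continuous_const)).continuousOn)
      (f' := fun t => h t x₀)
    · intro t _; exact (hderiv x₀ t).hasDerivWithinAt
    · intro t ht
      exact hhpos x₀ hx₀V t (interior_subset ht)
  have hm1 : (t₀ - δ) ∈ Icc (t₀ - δ) (t₀ + δ) := ⟨le_refl _, by linarith⟩
  have hm2 : t₀ ∈ Icc (t₀ - δ) (t₀ + δ) := ⟨by linarith, by linarith⟩
  have hm3 : (t₀ + δ) ∈ Icc (t₀ - δ) (t₀ + δ) := ⟨by linarith, le_refl _⟩
  have hleft : g (t₀ - δ) x₀ < 0 := by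
    have := hmono hm1 hm2 (by linarith)
    simpa [hg0] using this
  have hright : 0 < g (t₀ + δ) x₀ := by
    have := hmono hm2 hm3 (by linarith)
    simpa [hg0] using this
  have hc1 : Continuous fun x => g (t₀ - δ) x :=
    hg.comp (continuous_const.prodMk continuous_id)
  have hc2 : Continuous fun x => g (t₀ + δ) x :=
    hg.comp (continuous_const.prodMk continuous_id)
  have hA : {x : E | g (t₀ - δ) x < 0} ∈ 𝓝 x₀ :=
    (isOpen_lt hc1 continuous_const).mem_nhds hleft
  have hB : {x : E | 0 < g (t₀ + δ) x} ∈ 𝓝 x₀ :=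
    (isOpen_lt continuous_const hc2).mem_nhds hright
  filter_upwards [hV, hA, hB] with x hxV hxA hxB
  have hcont : ContinuousOn (fun t => g t x) (Icc (t₀ - δ) (t₀ + δ)) :=
    (hg.comp (continuous_id.prodMk continuous_const)).continuousOn
  have h0mem : (0 : ℝ) ∈ Icc (g (t₀ - δ) x) (g (t₀ + δ) x) := ⟨le_of_lt hxA, le_of_lt hxB⟩
  obtain ⟨t, htmem, htg⟩ := intermediate_value_Icc (by linarith) hcont h0mem
  exact ⟨t, by linarith [htmem.1], htg, (hhpos x hxV t htmem).ne'⟩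

/-- The maximal forward-return domain
`U = {x ∈ Σ \ C : ∃ t > 0, φ t x ∈ Σ \ C}` is open in the subspace topology of the
hyperplane `Σ = {⟪·, ν⟫ = a}`, where `C = {x ∈ Σ : ⟪F x, ν⟫ = 0}` is the tangency
locus. -/
theorem forward_return_domain_isOpen
    (n : ℕ) (hn : 1 ≤ n)
    (F : EuclideanSpace ℝ (Fin n) → EuclideanSpace ℝ (Fin n))
    (hFcont : Continuous F)
    (φ : ℝ → EuclideanSpace ℝ (Fin n) → EuclideanSpace ℝ (Fin n))
    (hφ : ContDiff ℝ 1 (fun p : ℝ × EuclideanSpace ℝ (Fin n) => φ p.1 p.2))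
    (hφ0 : ∀ x, φ 0 x = x)
    (hφadd : ∀ s t : ℝ, ∀ x, φ (s + t) x = φ s (φ t x))
    (hφF : ∀ (t : ℝ) (x : EuclideanSpace ℝ (Fin n)),
      HasDerivAt (fun τ : ℝ => φ τ x) (F (φ t x)) t)
    (ν : EuclideanSpace ℝ (Fin n)) (hν : ν ≠ 0) (a : ℝ) :
    IsOpen (Subtype.val ⁻¹'
        {x : EuclideanSpace ℝ (Fin n) |
          (⟪x, ν⟫ = a ∧ ⟪F x, ν⟫ ≠ 0) ∧
          ∃ t > (0 : ℝ), ⟪φ t x, ν⟫ = a ∧ ⟪F (φ t x), ν⟫ ≠ 0} :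
      Set {x : EuclideanSpace ℝ (Fin n) | ⟪x, ν⟫ = a}) := by
  set g : ℝ → EuclideanSpace ℝ (Fin n) → ℝ := fun t x => ⟪φ t x, ν⟫ - a with hgdef
  set h : ℝ → EuclideanSpace ℝ (Fin n) → ℝ := fun t x => ⟪F (φ t x), ν⟫ with hhdef
  have hφc : Continuous fun p : ℝ × EuclideanSpace ℝ (Fin n) => φ p.1 p.2 := hφ.continuous
  have hgc : Continuous fun p : ℝ × EuclideanSpace ℝ (Fin n) => g p.1 p.2 :=
    (hφc.inner continuous_const).sub continuous_const
  have hhc : Continuous fun p : ℝ × EuclideanSpace ℝ (Fin n) => h p.1 p.2 :=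
    (hFcont.comp hφc).inner continuous_const
  have hderiv : ∀ (x : EuclideanSpace ℝ (Fin n)) (t : ℝ),
      HasDerivAt (fun τ => g τ x) (h t x) t := by
    intro x t
    have := ((hφF t x).inner ℝ (hasDerivAt_const t ν)).sub_const a
    show HasDerivAt (fun τ => ⟪φ τ x, ν⟫ - a) (⟪F (φ t x), ν⟫) t
    simpa only [inner_zero_right, zero_add] using this
  have hopen : IsOpen {x : EuclideanSpace ℝ (Fin n) |
      ⟪F x, ν⟫ ≠ 0 ∧ ∃ t > (0 : ℝ), g t x = 0 ∧ h t x ≠ 0} := by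
    rw [isOpen_iff_mem_nhds]
    rintro x₀ ⟨hFx₀, t₀, ht₀, hg0, hh0⟩
    have h1 : {x : EuclideanSpace ℝ (Fin n) | ⟪F x, ν⟫ ≠ 0} ∈ 𝓝 x₀ :=
      (isOpen_ne_fun (hFcont.inner continuous_const) continuous_const).mem_nhds hFx₀
    have h2 : {x : EuclideanSpace ℝ (Fin n) | ∃ t > (0 : ℝ), g t x = 0 ∧ h t x ≠ 0} ∈ 𝓝 x₀ := by
      rcases hh0.lt_or_gt with hneg | hpos
      · have := aux_nhds (fun t x => -g t x) (fun t x => -h t x)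
          hgc.neg hhc.neg (fun x t => (hderiv x t).neg) x₀ t₀ ht₀
          (by simp [hg0]) (by simpa using hneg)
        simpa using this
      · exact aux_nhds g h hgc hhc hderiv x₀ t₀ ht₀ hg0 hpos
    filter_upwards [h1, h2] with x hx1 hx2 using ⟨hx1, hx2⟩
  have key : (Subtype.val ⁻¹'
        {x : EuclideanSpace ℝ (Fin n) | (⟪x, ν⟫ = a ∧ ⟪F x, ν⟫ ≠ 0) ∧
          ∃ t > (0 : ℝ), ⟪φ t x, ν⟫ = a ∧ ⟪F (φ t x), ν⟫ ≠ 0} :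
      Set {x : EuclideanSpace ℝ (Fin n) | ⟪x, ν⟫ = a}) =
      Subtype.val ⁻¹' {x : EuclideanSpace ℝ (Fin n) |
        ⟪F x, ν⟫ ≠ 0 ∧ ∃ t > (0 : ℝ), g t x = 0 ∧ h t x ≠ 0} := by
    ext ⟨x, hx⟩
    simp only [mem_preimage, mem_setOf_eq, hgdef, hhdef]
    constructor
    · rintro ⟨⟨-, h1⟩, t, ht, h2, h3⟩
      exact ⟨h1, t, ht, by rw [h2]; ring, h3⟩
    · rintro ⟨h1, t, ht, h2, h3⟩
      exact ⟨⟨hx, h1⟩, t, ht, by linarith [h2], h3⟩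
  rw [key]
  exact hopen.preimage continuous_subtype_val
end

section
/- The maximal backward-return domain U' := {x ∈ Σ \ C : there exists t > 0 with φ(−t, x) ∈ Σ \ C} is an open subset of Σ in the subspace topology of Σ. (U' contains the image of the forward return map defined on U := {x ∈ Σ \ C : ∃ t > 0, φ(t, x) ∈ Σ \ C}.) -/
set_option maxHeartbeats 1000000


open scoped RealInnerProductSpace

/-- The maximal backward-return domain
`U' = {x ∈ Σ \ C : ∃ t > 0, φ (-t) x ∈ Σ \ C}` is open in the subspace topology of
the hyperplane `Σ = {⟪·, ν⟫ = a}`, where `C = {x ∈ Σ : ⟪F x, ν⟫ = 0}` is the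
tangency locus.  Moreover `U'` contains the image of the forward return map defined
on `U = {x ∈ Σ \ C : ∃ t > 0, φ t x ∈ Σ \ C}`: any point of `Σ \ C` reached from a
point of `Σ \ C` in positive time lies in `U'`. -/
theorem backward_return_domain_isOpen
    (n : ℕ) (hn : 1 ≤ n)
    (F : EuclideanSpace ℝ (Fin n) → EuclideanSpace ℝ (Fin n))
    (hFcont : Continuous F)
    (φ : ℝ → EuclideanSpace ℝ (Fin n) → EuclideanSpace ℝ (Fin n))
    (hφ : ContDiff ℝ 1 (fun p : ℝ × EuclideanSpace ℝ (Fin n) => φ p.1 p.2))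
    (hφ0 : ∀ x, φ 0 x = x)
    (hφadd : ∀ s t : ℝ, ∀ x, φ (s + t) x = φ s (φ t x))
    (hφF : ∀ (t : ℝ) (x : EuclideanSpace ℝ (Fin n)),
      HasDerivAt (fun τ : ℝ => φ τ x) (F (φ t x)) t)
    (ν : EuclideanSpace ℝ (Fin n)) (hν : ν ≠ 0) (a : ℝ) :
    IsOpen (Subtype.val ⁻¹'
        {x : EuclideanSpace ℝ (Fin n) |
          (⟪x, ν⟫ = a ∧ ⟪F x, ν⟫ ≠ 0) ∧
          ∃ t > (0 : ℝ), ⟪φ (-t) x, ν⟫ = a ∧ ⟪F (φ (-t) x), ν⟫ ≠ 0} :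
      Set {x : EuclideanSpace ℝ (Fin n) | ⟪x, ν⟫ = a}) ∧
    (∀ x : EuclideanSpace ℝ (Fin n), (⟪x, ν⟫ = a ∧ ⟪F x, ν⟫ ≠ 0) →
      ∀ t > (0 : ℝ), (⟪φ t x, ν⟫ = a ∧ ⟪F (φ t x), ν⟫ ≠ 0) →
        φ t x ∈ {y : EuclideanSpace ℝ (Fin n) |
          (⟪y, ν⟫ = a ∧ ⟪F y, ν⟫ ≠ 0) ∧
          ∃ s > (0 : ℝ), ⟪φ (-s) y, ν⟫ = a ∧ ⟪F (φ (-s) y), ν⟫ ≠ 0}) := by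
  -- continuity of the backward flow in both variables
  have hφc : Continuous (fun p : ℝ × EuclideanSpace ℝ (Fin n) => φ p.1 p.2) := hφ.continuous
  have hbc : Continuous (fun p : ℝ × EuclideanSpace ℝ (Fin n) => φ (-p.1) p.2) :=
    hφc.comp ((continuous_fst.neg).prodMk continuous_snd)
  -- h p = ⟪F (φ (-p.1) p.2), ν⟫ and g p = ⟪φ (-p.1) p.2, ν⟫
  set h : ℝ × EuclideanSpace ℝ (Fin n) → ℝ :=
    fun p => ⟪F (φ (-p.1) p.2), ν⟫ with hh_def
  have hhc : Continuous h := ((hFcont.comp hbc).inner continuous_const)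
  set g : ℝ × EuclideanSpace ℝ (Fin n) → ℝ :=
    fun p => ⟪φ (-p.1) p.2, ν⟫ with hg_def
  have hgc : Continuous g := hbc.inner continuous_const
  -- derivative of τ ↦ g (τ, y)
  have hderiv : ∀ (τ : ℝ) (y : EuclideanSpace ℝ (Fin n)),
      HasDerivAt (fun σ : ℝ => g (σ, y)) (-h (τ, y)) τ := by
    intro τ y
    have h1 : HasDerivAt (fun σ : ℝ => φ (-σ) y)
        ((-1 : ℝ) • F (φ (-τ) y)) τ :=
      (hφF (-τ) y).scomp τ (hasDerivAt_neg τ)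
    have h2 := h1.inner ℝ (hasDerivAt_const τ ν)
    simpa [h, g, inner_smul_left, real_inner_comm] using h2
  constructor
  · -- openness
    rw [isOpen_iff_mem_nhds]
    rintro ⟨x, hxmem⟩ hx
    simp only [Set.mem_preimage, Set.mem_setOf_eq] at hx
    obtain ⟨⟨hxa, hxF⟩, t₀, ht₀, hta, htF⟩ := hx
    set d : ℝ := ⟪F (φ (-t₀) x), ν⟫ with hd_def
    have hd : d ≠ 0 := htF
    have hdd : (0 : ℝ) < d * d := mul_self_pos.mpr hd
    -- choose ε > 0 with ε < t₀ s.t. h(τ,x)*d > 0 for τ ∈ Icc (t₀-ε) (t₀+ε)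
    have hScont : Continuous (fun τ : ℝ => h (τ, x) * d) :=
      (hhc.comp ((continuous_id).prodMk continuous_const)).mul continuous_const
    have hSopen : IsOpen {τ : ℝ | 0 < h (τ, x) * d} :=
      isOpen_lt continuous_const hScont
    have ht₀S : t₀ ∈ {τ : ℝ | 0 < h (τ, x) * d} := by
      simpa [h, hd_def] using hdd
    obtain ⟨δ, hδ, hball⟩ := Metric.mem_nhds_iff.mp (hSopen.mem_nhds ht₀S)
    set ε : ℝ := min (δ / 2) (t₀ / 2) with hε_def
    have hεpos : 0 < ε := lt_min (by linarith) (by linarith)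
    have hεδ : ε < δ := lt_of_le_of_lt (min_le_left _ _) (by linarith)
    have hεt₀ : ε < t₀ := lt_of_le_of_lt (min_le_right _ _) (by linarith)
    have hKsub : Set.Icc (t₀ - ε) (t₀ + ε) ⊆ {τ : ℝ | 0 < h (τ, x) * d} := by
      intro τ hτ
      apply hball
      rw [Metric.mem_ball, Real.dist_eq, abs_sub_lt_iff]
      constructor <;> [linarith [hτ.2]; linarith [hτ.1]]
    -- tube lemma
    have hNopen : IsOpen {p : ℝ × EuclideanSpace ℝ (Fin n) | 0 < h p * d} :=
      isOpen_lt continuous_const (hhc.mul continuous_const)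
    have hNsub : (Set.Icc (t₀ - ε) (t₀ + ε)) ×ˢ ({x} : Set (EuclideanSpace ℝ (Fin n))) ⊆
        {p : ℝ × EuclideanSpace ℝ (Fin n) | 0 < h p * d} := by
      rintro ⟨τ, y⟩ ⟨hτ, hy⟩
      simp only [Set.mem_singleton_iff] at hy
      subst hy
      exact hKsub hτ
    obtain ⟨u, v, huo, hvo, hKu, hxv', huv⟩ :=
      generalized_tube_lemma isCompact_Icc isCompact_singleton hNopen hNsub
    have hxv : x ∈ v := hxv' rfl
    -- h has the sign of d on Icc × v; in particular ≠ 0 there, and constant sign for IVT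
    have htube : ∀ τ ∈ Set.Icc (t₀ - ε) (t₀ + ε), ∀ y ∈ v, 0 < h (τ, y) * d := by
      intro τ hτ y hy
      exact huv ⟨hKu hτ, hy⟩
    -- at x: g (t₀-ε, x) and g (t₀+ε, x) straddle a strictly
    have hle : t₀ - ε ≤ t₀ + ε := by linarith
    have hfa : g (t₀, x) = a := by simpa [g] using hta
    have hstraddle : (g (t₀ - ε, x) - a) * (g (t₀ + ε, x) - a) < 0 := by
      have hcontf : ContinuousOn (fun τ : ℝ => g (τ, x)) (Set.Icc (t₀ - ε) (t₀ + ε)) :=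
        (hgc.comp ((continuous_id).prodMk continuous_const)).continuousOn
      have hderivval : ∀ τ ∈ interior (Set.Icc (t₀ - ε) (t₀ + ε)),
          deriv (fun σ : ℝ => g (σ, x)) τ = -h (τ, x) := fun τ _ => (hderiv τ x).deriv
      have hmemlo : t₀ - ε ∈ Set.Icc (t₀ - ε) (t₀ + ε) := ⟨le_refl _, hle⟩
      have hmemhi : t₀ + ε ∈ Set.Icc (t₀ - ε) (t₀ + ε) := ⟨hle, le_refl _⟩
      have hmemmid : t₀ ∈ Set.Icc (t₀ - ε) (t₀ + ε) := ⟨by linarith, by linarith⟩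
      rcases hd.lt_or_gt with hdneg | hdpos
      · -- d < 0 : h(τ,x) < 0 on Icc, so g(·,x) strictly increasing
        have hmono : StrictMonoOn (fun τ : ℝ => g (τ, x)) (Set.Icc (t₀ - ε) (t₀ + ε)) := by
          apply strictMonoOn_of_deriv_pos (convex_Icc _ _) hcontf
          intro τ hτ
          rw [hderivval τ hτ]
          have hτ' : τ ∈ Set.Icc (t₀ - ε) (t₀ + ε) := interior_subset hτ
          have := htube τ hτ' x hxv
          nlinarith
        have h1 : g (t₀ - ε, x) < a := by
          rw [← hfa]; exact hmono hmemlo hmemmid (by linarith)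
        have h2 : a < g (t₀ + ε, x) := by
          rw [← hfa]; exact hmono hmemmid hmemhi (by linarith)
        nlinarith
      · -- d > 0 : g(·,x) strictly decreasing
        have hmono : StrictAntiOn (fun τ : ℝ => g (τ, x)) (Set.Icc (t₀ - ε) (t₀ + ε)) := by
          apply strictAntiOn_of_deriv_neg (convex_Icc _ _) hcontf
          intro τ hτ
          rw [hderivval τ hτ]
          have hτ' : τ ∈ Set.Icc (t₀ - ε) (t₀ + ε) := interior_subset hτ
          have := htube τ hτ' x hxv
          nlinarith
        have h1 : a < g (t₀ - ε, x) := by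
          rw [← hfa]; exact hmono hmemlo hmemmid (by linarith)
        have h2 : g (t₀ + ε, x) < a := by
          rw [← hfa]; exact hmono hmemmid hmemhi (by linarith)
        nlinarith
    -- the open neighborhood O of x
    set O : Set (EuclideanSpace ℝ (Fin n)) :=
      v ∩ {y | ⟪F y, ν⟫ ≠ 0} ∩ {y | (g (t₀ - ε, y) - a) * (g (t₀ + ε, y) - a) < 0}
      with hO_def
    have hOopen : IsOpen O := by
      apply IsOpen.inter
      · exact hvo.inter (isOpen_ne_fun (hFcont.inner continuous_const) continuous_const)
      · apply isOpen_lt _ continuous_const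
        exact ((hgc.comp ((continuous_const).prodMk continuous_id)).sub continuous_const).mul
          ((hgc.comp ((continuous_const).prodMk continuous_id)).sub continuous_const)
    have hxO : x ∈ O := ⟨⟨hxv, hxF⟩, hstraddle⟩
    -- every point of O ∩ Σ is in the set
    have hkey : ∀ y ∈ O, ⟪y, ν⟫ = a →
        (⟪y, ν⟫ = a ∧ ⟪F y, ν⟫ ≠ 0) ∧
          ∃ t > (0 : ℝ), ⟪φ (-t) y, ν⟫ = a ∧ ⟪F (φ (-t) y), ν⟫ ≠ 0 := by
      rintro y ⟨⟨hyv, hyF⟩, hyprod⟩ hya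
      refine ⟨⟨hya, hyF⟩, ?_⟩
      -- IVT on [t₀-ε, t₀+ε]
      have hcontf : ContinuousOn (fun τ : ℝ => g (τ, y)) (Set.uIcc (t₀ - ε) (t₀ + ε)) :=
        (hgc.comp ((continuous_id).prodMk continuous_const)).continuousOn
      have hmem : a ∈ Set.uIcc (g (t₀ - ε, y)) (g (t₀ + ε, y)) := by
        rcases mul_neg_iff.mp (by simpa using hyprod) with ⟨h1, h2⟩ | ⟨h1, h2⟩
        · exact Set.mem_uIcc.mpr (Or.inr ⟨by linarith, by linarith⟩)
        · exact Set.mem_uIcc.mpr (Or.inl ⟨by linarith, by linarith⟩)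
      obtain ⟨t, htI, htval⟩ := intermediate_value_uIcc hcontf hmem
      rw [Set.uIcc_of_le hle] at htI
      refine ⟨t, by linarith [htI.1], by simpa [g] using htval, ?_⟩
      have := htube t htI y hyv
      intro hzero
      rw [hh_def] at this
      simp only at this
      rw [hzero] at this
      simp at this
    -- conclude: the preimage is a neighborhood
    have hOmem : O ∈ nhds x := hOopen.mem_nhds hxO
    have hpre : (Subtype.val : {x : EuclideanSpace ℝ (Fin n) | ⟪x, ν⟫ = a} → _) ⁻¹' O ∈
        nhds (⟨x, hxmem⟩ : {x : EuclideanSpace ℝ (Fin n) | ⟪x, ν⟫ = a}) :=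
      continuous_subtype_val.continuousAt.preimage_mem_nhds hOmem
    refine Filter.mem_of_superset hpre ?_
    rintro ⟨y, hymem⟩ hyO
    exact hkey y hyO hymem
  · -- image of the return map
    rintro x ⟨hxa, hxF⟩ t ht ⟨hta, htF⟩
    have hback : φ (-t) (φ t x) = x := by
      rw [← hφadd]; simp [hφ0]
    refine ⟨⟨hta, htF⟩, t, ht, ?_, ?_⟩ <;> rw [hback]
    · exact hxa
    · exact hxF
end

section
/- (Boundary dichotomy for the return domain.) Let U := {x ∈ Σ \ C : ∃ t > 0, φ(t, x) ∈ Σ \ C}. Suppose x ∈ Σ \ C with x ∉ U, and let (x_k) be a sequence in U with x_k → x and let t_k > 0 satisfy φ(t_k, x_k) ∈ Σ \ C for each k. Then every real limit point t* of the sequence (t_k) satisfies t* > 0 and φ(t*, x) ∈ C. In particular, if the forward orbit {φ(t, x) : t > 0} never meets C, then t_k → ∞. -/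
open Filter Set Topology
open scoped RealInnerProductSpace

/-! Near a point `x` where the flow is transversal to `Σ`, the derivative `⟪F (φ t y), ν⟫` of
`t ↦ ⟪φ t y, ν⟫` stays nonzero for `(t, y)` close to `(0, x)`, so by Rolle's theorem orbits
starting on `Σ` near `x` cannot come back to `Σ` within a short time. Hence return times of
points `x_k → x` cannot accumulate at `0`; a limit `t*` of them has `φ t* x ∈ Σ` because `Σ` is
closed, and `φ t* x ∉ Σ \ C` because `x ∉ U`. Finally, a real sequence bounded below without
cluster points tends to `+∞`, since its terms below any level would cluster in a compact
interval. -/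

theorem MapClusterPt.prodMk_of_tendsto {ι X Y : Type*} [TopologicalSpace X] [TopologicalSpace Y]
    {l : Filter ι} {u : ι → X} {v : ι → Y} {x : X} {y : Y}
    (hu : MapClusterPt x l u) (hv : Tendsto v l (𝓝 y)) :
    MapClusterPt (x, y) l fun i => (u i, v i) := by
  rw [((𝓝 x).basis_sets.prod_nhds (𝓝 y).basis_sets).mapClusterPt_iff_frequently]
  rintro ⟨s, t⟩ ⟨hs, ht⟩
  exact (mapClusterPt_iff_frequently.1 hu s hs).and_eventually (hv ht)

theorem tendsto_atTop_of_forall_not_mapClusterPt {ι α : Type*} [LinearOrder α]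
    [TopologicalSpace α] [CompactIccSpace α] {l : Filter ι} {u : ι → α} {c : α}
    (hc : ∀ᶠ i in l, c ≤ u i) (hu : ∀ t, ¬ MapClusterPt t l u) : Tendsto u l atTop := by
  refine tendsto_atTop.2 fun M => ?_
  by_contra h
  have hIcc : ∃ᶠ i in l, u i ∈ Icc c M :=
    ((not_eventually.1 h).and_eventually hc).mono fun i hi => ⟨hi.2, (not_le.1 hi.1).le⟩
  obtain ⟨t, -, ht⟩ := isCompact_Icc.exists_mapClusterPt_of_frequently hIcc
  exact hu t ht

theorem eventually_ne_apply_zero_of_hasDerivAt {Y : Type*} [TopologicalSpace Y]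
    {g g' : ℝ → Y → ℝ} {y₀ : Y} (hg : ∀ t y, HasDerivAt (g · y) (g' t y) t)
    (hg' : ContinuousAt (fun p : ℝ × Y => g' p.1 p.2) (0, y₀)) (hy₀ : g' 0 y₀ ≠ 0) :
    ∀ᶠ p : ℝ × Y in 𝓝 (0, y₀), 0 < p.1 → g p.1 p.2 ≠ g 0 p.2 := by
  have hne : ∀ᶠ p : ℝ × Y in 𝓝 0 ×ˢ 𝓝 y₀, g' p.1 p.2 ≠ 0 := by
    rw [← nhds_prod_eq]; exact hg'.eventually_ne hy₀
  obtain ⟨P, hP, Q, hQ, hPQ⟩ := eventually_prod_iff.1 hne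
  obtain ⟨ε, hε, hball⟩ := Metric.eventually_nhds_iff_ball.1 hP
  rw [nhds_prod_eq]
  filter_upwards [(eventually_lt_nhds hε).prod_mk hQ]
  rintro ⟨t, y⟩ ⟨htε, hy⟩ htpos heq
  obtain ⟨c, hc, hc0⟩ := exists_hasDerivAt_eq_zero htpos
    (fun s _ => (hg s y).continuousAt.continuousWithinAt) heq.symm fun s _ => hg s y
  have hcε : c ∈ Metric.ball (0 : ℝ) ε := by
    rw [Metric.mem_ball, Real.dist_0_eq_abs, abs_of_pos hc.1]
    exact hc.2.trans htε
  exact hPQ (hball c hcε) hy hc0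

section Flow

variable {E : Type*} [NormedAddCommGroup E] [InnerProductSpace ℝ E] {F : E → E}
  {φ : ℝ → E → E} {ν x : E}

theorem eventually_inner_flow_ne_inner (hF : Continuous F)
    (hφ : Continuous fun p : ℝ × E => φ p.1 p.2) (hφ0 : ∀ y, φ 0 y = y)
    (hφF : ∀ t y, HasDerivAt (fun τ : ℝ => φ τ y) (F (φ t y)) t) (hx : ⟪F x, ν⟫ ≠ 0) :
    ∀ᶠ p : ℝ × E in 𝓝 (0, x), 0 < p.1 → ⟪φ p.1 p.2, ν⟫ ≠ ⟪p.2, ν⟫ := by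
  have hderiv : ∀ t y, HasDerivAt (fun τ => ⟪φ τ y, ν⟫) ⟪F (φ t y), ν⟫ t := fun t y => by
    simpa using (hφF t y).inner ℝ (hasDerivAt_const t ν)
  have hcont : ContinuousAt (fun p : ℝ × E => ⟪F (φ p.1 p.2), ν⟫) (0, x) :=
    ((hF.comp hφ).inner continuous_const).continuousAt
  simpa only [hφ0] using
    eventually_ne_apply_zero_of_hasDerivAt hderiv hcont (by simpa only [hφ0] using hx)

theorem pos_and_inner_flow_eq_of_mapClusterPt (hF : Continuous F)
    (hφ : Continuous fun p : ℝ × E => φ p.1 p.2) (hφ0 : ∀ y, φ 0 y = y)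
    (hφF : ∀ t y, HasDerivAt (fun τ : ℝ => φ τ y) (F (φ t y)) t) (hx : ⟪F x, ν⟫ ≠ 0)
    {ι : Type*} {l : Filter ι} {xs : ι → E} {ts : ι → ℝ} {a t : ℝ}
    (hxs : Tendsto xs l (𝓝 x)) (hxs_mem : ∀ i, ⟪xs i, ν⟫ = a)
    (hts : ∀ i, 0 < ts i ∧ ⟪φ (ts i) (xs i), ν⟫ = a) (ht : MapClusterPt t l ts) :
    0 < t ∧ ⟪φ t x, ν⟫ = a := by
  have hpair := ht.prodMk_of_tendsto hxs
  have hmem : ⟪φ t x, ν⟫ = a :=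
    (isClosed_eq (hφ.inner continuous_const) continuous_const).mem_of_mapClusterPt hpair
      (Eventually.of_forall fun i => (hts i).2)
  have hnonneg : 0 ≤ t :=
    isClosed_Ici.mem_of_mapClusterPt ht (Eventually.of_forall fun i => (hts i).1.le)
  refine ⟨hnonneg.lt_of_ne ?_, hmem⟩
  rintro rfl
  obtain ⟨i, hi⟩ := (hpair.frequently (eventually_inner_flow_ne_inner hF hφ hφ0 hφF hx)).exists
  exact hi (hts i).1 ((hts i).2.trans (hxs_mem i).symm)

end Flow

theorem return_domain_boundary_dichotomy_general
    (n : ℕ)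
    (F : EuclideanSpace ℝ (Fin n) → EuclideanSpace ℝ (Fin n))
    (hFcont : Continuous F)
    (φ : ℝ → EuclideanSpace ℝ (Fin n) → EuclideanSpace ℝ (Fin n))
    (hφ : ContDiff ℝ 1 (fun p : ℝ × EuclideanSpace ℝ (Fin n) => φ p.1 p.2))
    (hφ0 : ∀ x, φ 0 x = x)
    (hφF : ∀ (t : ℝ) (x : EuclideanSpace ℝ (Fin n)),
      HasDerivAt (fun τ : ℝ => φ τ x) (F (φ t x)) t)
    (ν : EuclideanSpace ℝ (Fin n)) (a : ℝ)
    (x : EuclideanSpace ℝ (Fin n))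
    (hxC : ⟪F x, ν⟫ ≠ 0)
    (hxU : ¬ ∃ t > (0 : ℝ), ⟪φ t x, ν⟫ = a ∧ ⟪F (φ t x), ν⟫ ≠ 0)
    (xk : ℕ → EuclideanSpace ℝ (Fin n)) (tk : ℕ → ℝ)
    (hxkU : ∀ k, (⟪xk k, ν⟫ = a ∧ ⟪F (xk k), ν⟫ ≠ 0) ∧
      ∃ t > (0 : ℝ), ⟪φ t (xk k), ν⟫ = a ∧ ⟪F (φ t (xk k)), ν⟫ ≠ 0)
    (hxkx : Filter.Tendsto xk Filter.atTop (nhds x))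
    (htk : ∀ k, 0 < tk k ∧ ⟪φ (tk k) (xk k), ν⟫ = a ∧ ⟪F (φ (tk k) (xk k)), ν⟫ ≠ 0) :
    (∀ tstar : ℝ, MapClusterPt tstar Filter.atTop tk →
        0 < tstar ∧ (⟪φ tstar x, ν⟫ = a ∧ ⟪F (φ tstar x), ν⟫ = 0)) ∧
    ((∀ t > (0 : ℝ), ¬ (⟪φ t x, ν⟫ = a ∧ ⟪F (φ t x), ν⟫ = 0)) →
        Filter.Tendsto tk Filter.atTop Filter.atTop) := by
  have hcluster : ∀ t : ℝ, MapClusterPt t atTop tk →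
      0 < t ∧ ⟪φ t x, ν⟫ = a ∧ ⟪F (φ t x), ν⟫ = 0 := by
    intro t ht
    obtain ⟨hpos, hmem⟩ := pos_and_inner_flow_eq_of_mapClusterPt hFcont hφ.continuous hφ0 hφF
      hxC hxkx (fun k => (hxkU k).1.1) (fun k => ⟨(htk k).1, (htk k).2.1⟩) ht
    exact ⟨hpos, hmem, not_not.1 fun hC => hxU ⟨t, hpos, hmem, hC⟩⟩
  refine ⟨hcluster, fun hforward => ?_⟩
  refine tendsto_atTop_of_forall_not_mapClusterPt (c := 0)
    (Eventually.of_forall fun k => (htk k).1.le) fun t ht => ?_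
  obtain ⟨hpos, hC⟩ := hcluster t ht
  exact hforward t hpos hC

/-- Boundary dichotomy for the return domain: let
`U = {x ∈ Σ \ C : ∃ t > 0, φ t x ∈ Σ \ C}`. If `x ∈ Σ \ C` is not in `U`, `(x_k)` is
a sequence in `U` converging to `x`, and `t_k > 0` satisfy `φ (t_k) (x_k) ∈ Σ \ C`,
then every real cluster point `t*` of `(t_k)` satisfies `t* > 0` and `φ t* x ∈ C`.
In particular, if the forward orbit of `x` never meets the tangency locus `C`, then
`t_k → ∞`. -/
theorem return_domain_boundary_dichotomy
    (n : ℕ) (hn : 1 ≤ n)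
    (F : EuclideanSpace ℝ (Fin n) → EuclideanSpace ℝ (Fin n))
    (hFcont : Continuous F)
    (φ : ℝ → EuclideanSpace ℝ (Fin n) → EuclideanSpace ℝ (Fin n))
    (hφ : ContDiff ℝ 1 (fun p : ℝ × EuclideanSpace ℝ (Fin n) => φ p.1 p.2))
    (hφ0 : ∀ x, φ 0 x = x)
    (hφadd : ∀ s t : ℝ, ∀ x, φ (s + t) x = φ s (φ t x))
    (hφF : ∀ (t : ℝ) (x : EuclideanSpace ℝ (Fin n)),
      HasDerivAt (fun τ : ℝ => φ τ x) (F (φ t x)) t)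
    (ν : EuclideanSpace ℝ (Fin n)) (hν : ν ≠ 0) (a : ℝ)
    (x : EuclideanSpace ℝ (Fin n))
    (hxSigma : ⟪x, ν⟫ = a) (hxC : ⟪F x, ν⟫ ≠ 0)
    (hxU : ¬ ∃ t > (0 : ℝ), ⟪φ t x, ν⟫ = a ∧ ⟪F (φ t x), ν⟫ ≠ 0)
    (xk : ℕ → EuclideanSpace ℝ (Fin n)) (tk : ℕ → ℝ)
    (hxkU : ∀ k, (⟪xk k, ν⟫ = a ∧ ⟪F (xk k), ν⟫ ≠ 0) ∧
      ∃ t > (0 : ℝ), ⟪φ t (xk k), ν⟫ = a ∧ ⟪F (φ t (xk k)), ν⟫ ≠ 0)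
    (hxkx : Filter.Tendsto xk Filter.atTop (nhds x))
    (htk : ∀ k, 0 < tk k ∧ ⟪φ (tk k) (xk k), ν⟫ = a ∧ ⟪F (φ (tk k) (xk k)), ν⟫ ≠ 0) :
    (∀ tstar : ℝ, MapClusterPt tstar Filter.atTop tk →
        0 < tstar ∧ (⟪φ tstar x, ν⟫ = a ∧ ⟪F (φ tstar x), ν⟫ = 0)) ∧
    ((∀ t > (0 : ℝ), ¬ (⟪φ t x, ν⟫ = a ∧ ⟪F (φ t x), ν⟫ = 0)) →
        Filter.Tendsto tk Filter.atTop Filter.atTop) :=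
  return_domain_boundary_dichotomy_general n F hFcont φ hφ hφ0 hφF ν a x hxC hxU xk tk hxkU hxkx htk
end
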